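/- arXiv:2308.16108 — 2 statements merged into one kernel-verified Lean document; each statement's English description precedes it below -/
import Mathlib

section
/- For 1 < q < ∞ and every nonnegative measurable function f on (0,∞), the dual Hardy operator H*f(x) = ∫ₓ^∞ f(t)/t dt satisfies ‖H*f‖_{L^q(0,∞)} ≤ p/(p-1) ‖f‖_{L^q(0,∞)}, where 1/p + 1/q = 1. -/
open MeasureTheory Set intervalIntegral
open scoped ENNReal NNReal

noncomputable section

lemma lint_rpow_Ioi {c x : ℝ} (hc : c < -1) (hx : 0 < x) :
    ∫⁻ t in Ioi x, ENNReal.ofReal t ^ c = ENNReal.ofReal (x ^ (c + 1) / (-(c + 1))) := by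
  have h1 : ∫⁻ t in Ioi x, ENNReal.ofReal t ^ c
      = ∫⁻ t in Ioi x, ENNReal.ofReal (t ^ c) := by
    refine setLIntegral_congr_fun measurableSet_Ioi
      (fun t ht => ?_)
    rw [ENNReal.ofReal_rpow_of_pos (hx.trans ht)]
  rw [h1, ← ofReal_integral_eq_lintegral_ofReal (integrableOn_Ioi_rpow_of_lt hc hx)
      (by filter_upwards [ae_restrict_mem measurableSet_Ioi] with t ht using
        Real.rpow_nonneg (hx.trans ht).le c),
    integral_Ioi_rpow_of_lt hc hx]
  congr 1
  rw [div_neg, neg_div]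

lemma lint_rpow_Ioo {c t : ℝ} (hc : -1 < c) (ht : 0 < t) :
    ∫⁻ x in Ioo 0 t, ENNReal.ofReal x ^ c = ENNReal.ofReal (t ^ (c + 1) / (c + 1)) := by
  have hc1 : 0 < c + 1 := by linarith
  have hInt : IntegrableOn (fun x : ℝ => x ^ c) (Ioo 0 t) volume := by
    have h := (intervalIntegral.intervalIntegrable_rpow' (a := 0) (b := t) hc)
    rw [intervalIntegrable_iff_integrableOn_Ioc_of_le ht.le] at h
    exact h.mono_set Ioo_subset_Ioc_self
  have h1 : ∫⁻ x in Ioo 0 t, ENNReal.ofReal x ^ c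
      = ∫⁻ x in Ioo 0 t, ENNReal.ofReal (x ^ c) := by
    refine setLIntegral_congr_fun measurableSet_Ioo
      (fun x hx => ?_)
    rw [ENNReal.ofReal_rpow_of_pos hx.1]
  have h2 : ∫ x in Ioo (0:ℝ) t, x ^ c = t ^ (c + 1) / (c + 1) := by
    rw [← integral_Ioc_eq_integral_Ioo, ← intervalIntegral.integral_of_le ht.le,
      integral_rpow (Or.inl hc), Real.zero_rpow hc1.ne', sub_zero]
  rw [h1, ← ofReal_integral_eq_lintegral_ofReal hInt
      (by filter_upwards [ae_restrict_mem measurableSet_Ioo] with x hx using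
        Real.rpow_nonneg hx.1.le c), h2]

/-- The dual Hardy operator `H*f(x) = ∫ₓ^∞ f(t)/t dt`. -/
def dualHardyOp (f : ℝ → ℝ) (x : ℝ) : ℝ := ∫ t in Ioi x, f t / t

/-- For `1 < q < ∞` and `p` the conjugate exponent (`1/p + 1/q = 1`),
`‖H*f‖_{L^q(0,∞)} ≤ (p/(p-1)) ‖f‖_{L^q(0,∞)}` for nonnegative measurable `f`. -/
theorem dual_hardy_inequality (p q : ℝ) (hq : 1 < q) (hpq : 1 / p + 1 / q = 1)
    (f : ℝ → ℝ) (hf : Measurable f) (hf0 : ∀ x, 0 ≤ f x) :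
    eLpNorm (dualHardyOp f) (ENNReal.ofReal q) (volume.restrict (Ioi (0 : ℝ))) ≤
      ENNReal.ofReal (p / (p - 1)) *
        eLpNorm f (ENNReal.ofReal q) (volume.restrict (Ioi (0 : ℝ))) := by
  have hq0 : (0:ℝ) < q := lt_trans one_pos hq
  have hq1 : (0:ℝ) < q - 1 := by linarith
  set u : ℝ := q⁻¹ with hu_def
  have hu : 0 < u := inv_pos.mpr hq0
  have huq : u * q = 1 := inv_mul_cancel₀ hq0.ne'
  -- the constant `p/(p-1)` equals `q`
  have hconst : p / (p - 1) = q := by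
    have h1 : 1 / p = 1 - 1 / q := by linarith
    have h2 : (0:ℝ) < 1 - 1 / q := by
      have : 1 / q < 1 := by rw [div_lt_one hq0]; linarith
      linarith
    have hp0 : p ≠ 0 := by
      intro h
      rw [h, div_zero] at h1
      linarith
    have hp : p = q / (q - 1) := by
      have hp' : p = (1 - 1/q)⁻¹ := by rw [← h1, one_div, inv_inv]
      rw [hp', show 1 - 1/q = (q-1)/q by field_simp, inv_div]
    rw [hp]
    rw [show q / (q-1) - 1 = 1/(q-1) by field_simp; ring]
    rw [div_div_div_eq]
    field_simp
  rw [hconst]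
  -- notation
  set g : ℝ → ℝ≥0∞ := fun t => ENNReal.ofReal (f t) with hg_def
  have hg : Measurable g := hf.ennreal_ofReal
  set J : ℝ≥0∞ := ∫⁻ t in Ioi (0:ℝ), g t ^ q with hJ
  have hqne : (ENNReal.ofReal q) ≠ 0 := by
    simp [ENNReal.ofReal_eq_zero, not_le, hq0]
  have hqtop : (ENNReal.ofReal q) ≠ ⊤ := ENNReal.ofReal_ne_top
  have htoReal : (ENNReal.ofReal q).toReal = q := ENNReal.toReal_ofReal hq0.le
  rw [eLpNorm_eq_lintegral_rpow_enorm_toReal hqne hqtop, eLpNorm_eq_lintegral_rpow_enorm_toReal hqne hqtop,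
    htoReal]
  simp only [enorm_eq_nnnorm]
  have hfnorm : (∫⁻ x in Ioi (0:ℝ), (‖f x‖₊ : ℝ≥0∞) ^ q) = J := by
    refine lintegral_congr fun x => ?_
    rw [← enorm_eq_nnnorm, Real.enorm_eq_ofReal (hf0 x)]
  rw [hfnorm]
  -- conjugate exponent
  have hconj : q.HolderConjugate (q/(q-1)) := Real.HolderConjugate.conjExponent hq
  -- the integrand of the inner lintegral after Hölder
  set G : ℝ → ℝ≥0∞ := fun t => g t ^ q * ENNReal.ofReal t ^ (-u) with hG
  have hGm : Measurable G :=
    (hg.pow_const q).mul (measurable_id.ennreal_ofReal.pow_const (-u))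
  set W : ℝ → ℝ≥0∞ := fun x => ENNReal.ofReal x ^ (u - 1) with hW
  have hWm : Measurable W := measurable_id.ennreal_ofReal.pow_const (u - 1)
  -- pointwise bound via Hölder
  have hpoint : ∀ x : ℝ, 0 < x →
      (‖dualHardyOp f x‖₊ : ℝ≥0∞) ^ q ≤
        ENNReal.ofReal q ^ (q - 1) * (W x * ∫⁻ t in Ioi x, G t) := by
    intro x hx
    set φ : ℝ → ℝ≥0∞ := fun t => g t * ENNReal.ofReal t ^ (-(u*u)) with hφ
    set ψ : ℝ → ℝ≥0∞ := fun t => ENNReal.ofReal t ^ (u*u - 1) with hψ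
    have hφm : AEMeasurable φ (volume.restrict (Ioi x)) :=
      (hg.mul (measurable_id.ennreal_ofReal.pow_const _)).aemeasurable
    have hψm : AEMeasurable ψ (volume.restrict (Ioi x)) :=
      (measurable_id.ennreal_ofReal.pow_const _).aemeasurable
    have ha : (‖dualHardyOp f x‖₊ : ℝ≥0∞) ≤ ∫⁻ t in Ioi x, (φ * ψ) t := by
      have heq : ∫⁻ t in Ioi x, ENNReal.ofReal (f t / t) = ∫⁻ t in Ioi x, (φ * ψ) t := by
        refine setLIntegral_congr_fun measurableSet_Ioi
          (fun t ht => ?_)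
        have ht0 : (0:ℝ) < t := hx.trans ht
        have hTne : ENNReal.ofReal t ≠ 0 := by
          simp [ENNReal.ofReal_eq_zero, not_le, ht0]
        simp only [Pi.mul_apply, hφ, hψ]
        rw [ENNReal.ofReal_div_of_pos ht0, div_eq_mul_inv, ← ENNReal.rpow_neg_one,
          mul_assoc, ← ENNReal.rpow_add _ _ hTne ENNReal.ofReal_ne_top]
        congr 1
        ring
      have hnn : 0 ≤ ∫ t in Ioi x, f t / t :=
        setIntegral_nonneg measurableSet_Ioi fun t ht => div_nonneg (hf0 t) (hx.trans ht).le
      show (‖∫ t in Ioi x, f t / t‖₊ : ℝ≥0∞) ≤ _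
      rw [← enorm_eq_nnnorm, Real.enorm_eq_ofReal hnn, ← heq]
      by_cases hi : IntegrableOn (fun t => f t / t) (Ioi x) volume
      · rw [ofReal_integral_eq_lintegral_ofReal hi
          (by filter_upwards [ae_restrict_mem measurableSet_Ioi] with t ht using
            div_nonneg (hf0 t) (hx.trans ht).le)]
      · rw [integral_undef hi]
        simp
    have holder := ENNReal.lintegral_mul_le_Lp_mul_Lq (volume.restrict (Ioi x)) hconj hφm hψm
    have hfac1 : ∫⁻ t in Ioi x, φ t ^ q = ∫⁻ t in Ioi x, G t := by
      refine setLIntegral_congr_fun measurableSet_Ioi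
        (fun t ht => ?_)
      simp only [hφ, hG]
      rw [ENNReal.mul_rpow_of_nonneg _ _ hq0.le, ← ENNReal.rpow_mul]
      congr 2
      linear_combination (-u) * huq
    have he2 : (u*u - 1) * (q/(q-1)) = -1 - u := by
      rw [hu_def]
      field_simp
      ring
    have hfac2 : ∫⁻ t in Ioi x, ψ t ^ (q/(q-1)) = ENNReal.ofReal (q * x ^ (-u)) := by
      have hψq : ∀ t ∈ Ioi x, ψ t ^ (q/(q-1)) = ENNReal.ofReal t ^ (-1 - u) := by
        intro t ht
        simp only [hψ]
        rw [← ENNReal.rpow_mul, he2]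
      rw [setLIntegral_congr_fun measurableSet_Ioi hψq,
        lint_rpow_Ioi (by linarith : -1 - u < -1) hx]
      congr 1
      rw [show (-1 - u + 1 : ℝ) = -u by ring, neg_neg, hu_def, div_eq_mul_inv, inv_inv, mul_comm]
    calc (‖dualHardyOp f x‖₊ : ℝ≥0∞) ^ q
        ≤ (∫⁻ t in Ioi x, (φ * ψ) t) ^ q := ENNReal.rpow_le_rpow ha hq0.le
      _ ≤ ((∫⁻ t in Ioi x, φ t ^ q) ^ (1/q) *
            (∫⁻ t in Ioi x, ψ t ^ (q/(q-1))) ^ (1/(q/(q-1)))) ^ q :=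
          ENNReal.rpow_le_rpow holder hq0.le
      _ = (∫⁻ t in Ioi x, φ t ^ q) *
            (∫⁻ t in Ioi x, ψ t ^ (q/(q-1))) ^ (q - 1) := by
          rw [ENNReal.mul_rpow_of_nonneg _ _ hq0.le, ← ENNReal.rpow_mul, ← ENNReal.rpow_mul,
            one_div_mul_cancel hq0.ne', ENNReal.rpow_one,
            show (1/(q/(q-1))) * q = q - 1 by field_simp]
      _ = (∫⁻ t in Ioi x, G t) * (ENNReal.ofReal q ^ (q-1) * W x) := by
          rw [hfac1, hfac2]
          congr 1
          rw [ENNReal.ofReal_mul hq0.le, ← ENNReal.ofReal_rpow_of_pos hx,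
            ENNReal.mul_rpow_of_nonneg _ _ hq1.le, hW, ← ENNReal.rpow_mul]
          congr 2
          linear_combination (-1 : ℝ) * huq
      _ = ENNReal.ofReal q ^ (q - 1) * (W x * ∫⁻ t in Ioi x, G t) := by ring
  -- Tonelli: swap the order of integration
  set F : ℝ → ℝ → ℝ≥0∞ :=
    fun x t => W x * G t * {z : ℝ × ℝ | z.1 < z.2}.indicator 1 (x, t) with hF
  have hFm : AEMeasurable (Function.uncurry F)
      ((volume.restrict (Ioi (0:ℝ))).prod (volume.restrict (Ioi (0:ℝ)))) := by
    refine Measurable.aemeasurable ?_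
    have : Function.uncurry F = fun z : ℝ × ℝ =>
        W z.1 * G z.2 * {z : ℝ × ℝ | z.1 < z.2}.indicator 1 z := rfl
    rw [this]
    exact ((hWm.comp measurable_fst).mul (hGm.comp measurable_snd)).mul
      (measurable_one.indicator (measurableSet_lt measurable_fst measurable_snd))
  have hL : ∀ x ∈ Ioi (0:ℝ), W x * ∫⁻ t in Ioi x, G t = ∫⁻ t in Ioi (0:ℝ), F x t := by
    intro x hx
    have hind : ∀ t, F x t = (Ioi x).indicator (fun t => W x * G t) t := by
      intro t
      by_cases h : x < t <;> simp [hF, Set.indicator, h]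
    calc W x * ∫⁻ t in Ioi x, G t
        = ∫⁻ t in Ioi x, W x * G t := (lintegral_const_mul _ hGm).symm
      _ = ∫⁻ t in Ioi x, W x * G t ∂(volume.restrict (Ioi (0:ℝ))) := by
          rw [Measure.restrict_restrict measurableSet_Ioi,
            inter_eq_self_of_subset_left (Ioi_subset_Ioi hx.le)]
      _ = ∫⁻ t in Ioi (0:ℝ), (Ioi x).indicator (fun t => W x * G t) t :=
          (lintegral_indicator measurableSet_Ioi _).symm
      _ = ∫⁻ t in Ioi (0:ℝ), F x t := lintegral_congr fun t => (hind t).symm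
  have hR : ∀ t ∈ Ioi (0:ℝ), (∫⁻ x in Ioi (0:ℝ), F x t) = G t * ∫⁻ x in Ioo 0 t, W x := by
    intro t ht
    have hind : ∀ x, F x t = (Iio t).indicator (fun x => G t * W x) x := by
      intro x
      by_cases h : x < t <;> simp [hF, Set.indicator, h, mul_comm]
    calc ∫⁻ x in Ioi (0:ℝ), F x t
        = ∫⁻ x in Ioi (0:ℝ), (Iio t).indicator (fun x => G t * W x) x :=
          lintegral_congr fun x => hind x
      _ = ∫⁻ x in Iio t, G t * W x ∂(volume.restrict (Ioi (0:ℝ))) :=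
          lintegral_indicator measurableSet_Iio _
      _ = ∫⁻ x in Ioo 0 t, G t * W x := by
          rw [Measure.restrict_restrict measurableSet_Iio, Iio_inter_Ioi]
      _ = G t * ∫⁻ x in Ioo 0 t, W x := lintegral_const_mul _ hWm
  have hswap : ∫⁻ x in Ioi (0:ℝ), W x * ∫⁻ t in Ioi x, G t
      = ∫⁻ t in Ioi (0:ℝ), G t * ∫⁻ x in Ioo 0 t, W x := by
    calc ∫⁻ x in Ioi (0:ℝ), W x * ∫⁻ t in Ioi x, G t
        = ∫⁻ x in Ioi (0:ℝ), ∫⁻ t in Ioi (0:ℝ), F x t :=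
          setLIntegral_congr_fun measurableSet_Ioi hL
      _ = ∫⁻ t in Ioi (0:ℝ), ∫⁻ x in Ioi (0:ℝ), F x t := lintegral_lintegral_swap hFm
      _ = ∫⁻ t in Ioi (0:ℝ), G t * ∫⁻ x in Ioo 0 t, W x :=
          setLIntegral_congr_fun measurableSet_Ioi hR
  have heval : ∫⁻ t in Ioi (0:ℝ), G t * ∫⁻ x in Ioo 0 t, W x = ENNReal.ofReal q * J := by
    rw [hJ, ← lintegral_const_mul' _ _ ENNReal.ofReal_ne_top]
    refine setLIntegral_congr_fun measurableSet_Ioi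
      (fun t ht => ?_)
    have hTne : ENNReal.ofReal t ≠ 0 := by
      simp [ENNReal.ofReal_eq_zero, not_le]
      exact ht
    have hWint : ∫⁻ x in Ioo 0 t, W x = ENNReal.ofReal q * ENNReal.ofReal t ^ u := by
      simp only [hW]
      rw [lint_rpow_Ioo (by linarith : (-1:ℝ) < u - 1) ht,
        show (u - 1 + 1 : ℝ) = u by ring,
        show t ^ u / u = q * t ^ u by rw [hu_def, div_eq_mul_inv, inv_inv, mul_comm],
        ENNReal.ofReal_mul hq0.le, ← ENNReal.ofReal_rpow_of_pos ht]
    rw [hWint, hG]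
    have hcancel : ENNReal.ofReal t ^ (-u) * ENNReal.ofReal t ^ u = 1 := by
      rw [← ENNReal.rpow_add _ _ hTne ENNReal.ofReal_ne_top, neg_add_cancel,
        ENNReal.rpow_zero]
    calc g t ^ q * ENNReal.ofReal t ^ (-u) * (ENNReal.ofReal q * ENNReal.ofReal t ^ u)
        = ENNReal.ofReal q * g t ^ q *
            (ENNReal.ofReal t ^ (-u) * ENNReal.ofReal t ^ u) := by ring
      _ = ENNReal.ofReal q * g t ^ q := by rw [hcancel, mul_one]
  -- the key estimate
  have key : ∫⁻ x in Ioi (0:ℝ), (‖dualHardyOp f x‖₊ : ℝ≥0∞) ^ q ≤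
      ENNReal.ofReal q ^ q * J := by
    calc ∫⁻ x in Ioi (0:ℝ), (‖dualHardyOp f x‖₊ : ℝ≥0∞) ^ q
        ≤ ∫⁻ x in Ioi (0:ℝ),
            ENNReal.ofReal q ^ (q - 1) * (W x * ∫⁻ t in Ioi x, G t) := by
          refine lintegral_mono_ae ?_
          filter_upwards [ae_restrict_mem measurableSet_Ioi] with x hx
          exact hpoint x hx
      _ = ENNReal.ofReal q ^ (q - 1) *
            ∫⁻ x in Ioi (0:ℝ), W x * ∫⁻ t in Ioi x, G t := by
          rw [lintegral_const_mul' _ _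
            (ENNReal.rpow_ne_top_of_nonneg hq1.le ENNReal.ofReal_ne_top)]
      _ = ENNReal.ofReal q ^ (q - 1) * (ENNReal.ofReal q * J) := by rw [hswap, heval]
      _ = ENNReal.ofReal q ^ q * J := by
          rw [← mul_assoc]
          congr 1
          calc ENNReal.ofReal q ^ (q - 1) * ENNReal.ofReal q
              = ENNReal.ofReal q ^ (q - 1) * ENNReal.ofReal q ^ (1:ℝ) := by
                rw [ENNReal.rpow_one]
            _ = ENNReal.ofReal q ^ (q - 1 + 1) :=
                (ENNReal.rpow_add _ _ hqne ENNReal.ofReal_ne_top).symm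
            _ = ENNReal.ofReal q ^ q := by norm_num
  calc (∫⁻ x in Ioi (0:ℝ), (‖dualHardyOp f x‖₊ : ℝ≥0∞) ^ q) ^ (1/q)
      ≤ (ENNReal.ofReal q ^ q * J) ^ (1/q) := ENNReal.rpow_le_rpow key (by positivity)
    _ = ENNReal.ofReal q * J ^ (1/q) := by
        rw [ENNReal.mul_rpow_of_nonneg _ _ (by positivity), ← ENNReal.rpow_mul,
          mul_one_div_cancel hq0.ne', ENNReal.rpow_one]
end
end

section
/- For 1 < p < ∞, the n-dimensional Hardy operator 𝓗f(x) = |x|^{-n} ∫_{|t|<|x|} f(t) dt satisfies ‖𝓗f‖_{L^p(ℝⁿ)} ≤ C(n,p) ‖f‖_{L^p(ℝⁿ)} for some constant C(n,p) depending only on n and p and all nonnegative measurable f. -/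
open MeasureTheory Metric

open Set
open scoped ENNReal

noncomputable section

namespace HardyAux

variable {E : Type*} [NormedAddCommGroup E] [NormedSpace ℝ E] [MeasurableSpace E] [BorelSpace E]
  [Nontrivial E] [FiniteDimensional ℝ E] (μ : Measure E) [μ.IsAddHaarMeasure]

theorem lintegral_fun_norm (f : ℝ → ℝ≥0∞) (hf : Measurable f) :
    ∫⁻ x, f ‖x‖ ∂μ = μ.toSphere univ
        * ∫⁻ r in Ioi (0:ℝ), ENNReal.ofReal (r ^ (Module.finrank ℝ E - 1)) * f r := calc
  ∫⁻ x, f ‖x‖ ∂μ = ∫⁻ x : ({0}ᶜ : Set E), f ‖(x : E)‖ ∂(μ.comap (↑)) := by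
    rw [lintegral_subtype_comap (μ := μ) (measurableSet_singleton (0:E)).compl
        (fun x => f ‖x‖), restrict_compl_singleton]
  _ = ∫⁻ y : sphere (0:E) 1 × Ioi (0:ℝ), f y.2
        ∂(μ.toSphere.prod (Measure.volumeIoiPow (Module.finrank ℝ E - 1))) :=
    Eq.trans (lintegral_congr fun x => by
        show f ‖(x:E)‖ = f (‖(x:E)‖ / 1); rw [div_one])
      (μ.measurePreserving_homeomorphUnitSphereProd.lintegral_comp
      (hf.comp (measurable_subtype_coe.comp measurable_snd)))
  _ = μ.toSphere univ * ∫⁻ r : Ioi (0:ℝ), f r ∂(Measure.volumeIoiPow (Module.finrank ℝ E - 1)) := by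
    rw [lintegral_prod (fun y : sphere (0:E) 1 × Ioi (0:ℝ) => f y.2) (by fun_prop)]
    simp [lintegral_const, mul_comm]
  _ = μ.toSphere univ * ∫⁻ r in Ioi (0:ℝ), ENNReal.ofReal (r ^ (Module.finrank ℝ E - 1)) * f r := by
    congr 1
    rw [Measure.volumeIoiPow, lintegral_withDensity_eq_lintegral_mul _
      (f := fun r : Ioi (0:ℝ) => ENNReal.ofReal (r.1 ^ (Module.finrank ℝ E - 1))) (by fun_prop)
      (g := fun r : Ioi (0:ℝ) => f r.1) (hf.comp measurable_subtype_coe)]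
    simp only [Pi.mul_apply]
    rw [lintegral_subtype_comap measurableSet_Ioi
      (fun r => ENNReal.ofReal (r ^ (Module.finrank ℝ E - 1)) * f r)]

end HardyAux

namespace HardyAux2
open HardyAux

theorem lintegral_Ioo_rpow {c R : ℝ} (hc : -1 < c) (hR : 0 < R) :
    ∫⁻ r in Ioo (0:ℝ) R, ENNReal.ofReal (r ^ c) = ENNReal.ofReal (R ^ (c+1) / (c+1)) := by
  have hc1 : 0 < c + 1 := by linarith
  have hint : IntegrableOn (fun r : ℝ => r ^ c) (Ioo 0 R) := by
    exact (intervalIntegral.intervalIntegrable_rpow' hc (a := 0) (b := R)).1.mono_set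
      Ioo_subset_Ioc_self
  rw [← ofReal_integral_eq_lintegral_ofReal hint ?pos]
  case pos =>
    filter_upwards [ae_restrict_mem measurableSet_Ioo] with r hr
    exact Real.rpow_nonneg hr.1.le c
  congr 1
  rw [Measure.restrict_congr_set Ioo_ae_eq_Ioc, ← intervalIntegral.integral_of_le hR.le,
    integral_rpow (Or.inl hc), Real.zero_rpow hc1.ne']
  ring

theorem lintegral_Ioi_rpow {c R : ℝ} (hc : c < -1) (hR : 0 < R) :
    ∫⁻ r in Ioi R, ENNReal.ofReal (r ^ c) = ENNReal.ofReal (-(R ^ (c+1)) / (c+1)) := by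
  rw [← ofReal_integral_eq_lintegral_ofReal (integrableOn_Ioi_rpow_of_lt hc hR) ?pos]
  case pos =>
    filter_upwards [ae_restrict_mem measurableSet_Ioi] with r hr
    exact Real.rpow_nonneg (le_trans hR.le hr.le) c
  rw [integral_Ioi_rpow_of_lt hc hR]

variable {E : Type*} [NormedAddCommGroup E] [NormedSpace ℝ E] [MeasurableSpace E] [BorelSpace E]
  [Nontrivial E] [FiniteDimensional ℝ E] (μ : Measure E) [μ.IsAddHaarMeasure]

theorem lintegral_rpow_norm_ball {c R : ℝ} (hc : -(Module.finrank ℝ E : ℝ) < c) (hR : 0 < R) :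
    ∫⁻ x in ball (0:E) R, ENNReal.ofReal (‖x‖ ^ c) ∂μ
      = μ.toSphere univ
        * ENNReal.ofReal (R ^ (c + Module.finrank ℝ E) / (c + Module.finrank ℝ E)) := by
  set n := Module.finrank ℝ E with hn
  have hn1 : 1 ≤ n := Module.finrank_pos
  have hcast : ((n - 1 : ℕ) : ℝ) = (n : ℝ) - 1 := by
    push_cast [Nat.cast_sub hn1]; ring
  have hmeas : Measurable fun r : ℝ => (Iio R).indicator (fun u => ENNReal.ofReal (u ^ c)) r :=
    Measurable.indicator (by fun_prop) measurableSet_Iio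
  have key : ∫⁻ x in ball (0:E) R, ENNReal.ofReal (‖x‖ ^ c) ∂μ
      = ∫⁻ x, (Iio R).indicator (fun u => ENNReal.ofReal (u ^ c)) ‖x‖ ∂μ := by
    rw [← lintegral_indicator measurableSet_ball]
    refine lintegral_congr fun x => ?_
    by_cases h : ‖x‖ < R
    · rw [Set.indicator_of_mem (mem_ball_zero_iff.2 h), Set.indicator_of_mem (mem_Iio.2 h)]
    · rw [Set.indicator_of_notMem (fun hx => h (mem_ball_zero_iff.1 hx)),
        Set.indicator_of_notMem (fun hx : ‖x‖ ∈ Iio R => h (mem_Iio.1 hx))]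
  rw [key, lintegral_fun_norm μ _ hmeas]
  congr 1
  have step : ∀ r : ℝ, ENNReal.ofReal (r ^ (n-1))
        * (Iio R).indicator (fun u => ENNReal.ofReal (u ^ c)) r
      = (Iio R).indicator (fun u => ENNReal.ofReal (u ^ (n-1)) * ENNReal.ofReal (u ^ c)) r := by
    intro r
    by_cases h : r ∈ Iio R
    · rw [Set.indicator_of_mem h, Set.indicator_of_mem h]
    · rw [Set.indicator_of_notMem h, Set.indicator_of_notMem h, mul_zero]
  calc ∫⁻ r in Ioi (0:ℝ), ENNReal.ofReal (r ^ (n-1))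
        * (Iio R).indicator (fun u => ENNReal.ofReal (u ^ c)) r
      = ∫⁻ r in Ioi (0:ℝ),
          (Iio R).indicator (fun u => ENNReal.ofReal (u ^ (n-1)) * ENNReal.ofReal (u ^ c)) r :=
        lintegral_congr fun r => step r
    _ = ∫⁻ r in Ioo (0:ℝ) R, ENNReal.ofReal (r ^ (n-1)) * ENNReal.ofReal (r ^ c) := by
        rw [lintegral_indicator measurableSet_Iio, Measure.restrict_restrict measurableSet_Iio,
          Set.Iio_inter_Ioi]
    _ = ∫⁻ r in Ioo (0:ℝ) R, ENNReal.ofReal (r ^ ((n:ℝ) - 1 + c)) := by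
        refine setLIntegral_congr_fun measurableSet_Ioo ?_
        intro r hr
        beta_reduce
        rw [← ENNReal.ofReal_mul (pow_nonneg hr.1.le _), ← Real.rpow_natCast r (n-1), hcast,
          ← Real.rpow_add hr.1]
    _ = ENNReal.ofReal (R ^ (c + n) / (c + n)) := by
        have he : (n:ℝ) - 1 + c + 1 = c + n := by ring
        rw [lintegral_Ioo_rpow (by linarith) hR, he]

theorem lintegral_rpow_norm_compl {c R : ℝ} (hc : c < -(Module.finrank ℝ E : ℝ)) (hR : 0 < R) :
    ∫⁻ x in (closedBall (0:E) R)ᶜ, ENNReal.ofReal (‖x‖ ^ c) ∂μ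
      = μ.toSphere univ
        * ENNReal.ofReal (-(R ^ (c + Module.finrank ℝ E)) / (c + Module.finrank ℝ E)) := by
  set n := Module.finrank ℝ E with hn
  have hn1 : 1 ≤ n := Module.finrank_pos
  have hcast : ((n - 1 : ℕ) : ℝ) = (n : ℝ) - 1 := by
    push_cast [Nat.cast_sub hn1]; ring
  have hmeas : Measurable fun r : ℝ => (Ioi R).indicator (fun u => ENNReal.ofReal (u ^ c)) r :=
    Measurable.indicator (by fun_prop) measurableSet_Ioi
  have key : ∫⁻ x in (closedBall (0:E) R)ᶜ, ENNReal.ofReal (‖x‖ ^ c) ∂μ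
      = ∫⁻ x, (Ioi R).indicator (fun u => ENNReal.ofReal (u ^ c)) ‖x‖ ∂μ := by
    rw [← lintegral_indicator measurableSet_closedBall.compl]
    refine lintegral_congr fun x => ?_
    by_cases h : R < ‖x‖
    · rw [Set.indicator_of_mem (by simpa [mem_closedBall_zero_iff] using not_le.2 h),
        Set.indicator_of_mem (mem_Ioi.2 h)]
    · rw [Set.indicator_of_notMem (fun hx => h (by simpa [mem_closedBall_zero_iff, not_le]
          using hx)), Set.indicator_of_notMem (fun hx : ‖x‖ ∈ Ioi R => h (mem_Ioi.1 hx))]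
  rw [key, lintegral_fun_norm μ _ hmeas]
  congr 1
  have step : ∀ r : ℝ, ENNReal.ofReal (r ^ (n-1))
        * (Ioi R).indicator (fun u => ENNReal.ofReal (u ^ c)) r
      = (Ioi R).indicator (fun u => ENNReal.ofReal (u ^ (n-1)) * ENNReal.ofReal (u ^ c)) r := by
    intro r
    by_cases h : r ∈ Ioi R
    · rw [Set.indicator_of_mem h, Set.indicator_of_mem h]
    · rw [Set.indicator_of_notMem h, Set.indicator_of_notMem h, mul_zero]
  calc ∫⁻ r in Ioi (0:ℝ), ENNReal.ofReal (r ^ (n-1))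
        * (Ioi R).indicator (fun u => ENNReal.ofReal (u ^ c)) r
      = ∫⁻ r in Ioi (0:ℝ),
          (Ioi R).indicator (fun u => ENNReal.ofReal (u ^ (n-1)) * ENNReal.ofReal (u ^ c)) r :=
        lintegral_congr fun r => step r
    _ = ∫⁻ r in Ioi R, ENNReal.ofReal (r ^ (n-1)) * ENNReal.ofReal (r ^ c) := by
        rw [lintegral_indicator measurableSet_Ioi, Measure.restrict_restrict measurableSet_Ioi,
          Set.Ioi_inter_Ioi, sup_eq_left.2 hR.le]
    _ = ∫⁻ r in Ioi R, ENNReal.ofReal (r ^ ((n:ℝ) - 1 + c)) := by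
        refine setLIntegral_congr_fun measurableSet_Ioi ?_
        intro r hr
        beta_reduce
        rw [← ENNReal.ofReal_mul (pow_nonneg (lt_trans hR hr).le _), ← Real.rpow_natCast r (n-1),
          hcast, ← Real.rpow_add (lt_trans hR hr)]
    _ = ENNReal.ofReal (-(R ^ (c + n)) / (c + n)) := by
        have h1 : (n:ℝ) - 1 + c < -1 := by linarith
        have he : (n:ℝ) - 1 + c + 1 = c + n := by ring
        rw [lintegral_Ioi_rpow h1 hR, he]

end HardyAux2


end

noncomputable section

/-- The `n`-dimensional Hardy operator `𝓗f(x) = |x|⁻ⁿ ∫_{|t|<|x|} f(t) dt`. -/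
def nHardy (n : ℕ) (f : EuclideanSpace ℝ (Fin n) → ℝ) (x : EuclideanSpace ℝ (Fin n)) : ℝ :=
  (‖x‖ ^ n)⁻¹ * ∫ t in ball (0 : EuclideanSpace ℝ (Fin n)) ‖x‖, f t

open HardyAux HardyAux2 in
/-- For `1 < p < ∞`, `𝓗` is bounded on `L^p(ℝⁿ)`: there is a constant `C(n,p)` with
`‖𝓗f‖_{L^p} ≤ C(n,p) ‖f‖_{L^p}` for all nonnegative measurable `f`. -/
theorem nHardy_Lp_bounded (n : ℕ) (hn : 0 < n) (p : ℝ) (hp : 1 < p) :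
    ∃ C : ℝ, 0 < C ∧ ∀ f : EuclideanSpace ℝ (Fin n) → ℝ, Measurable f → (∀ x, 0 ≤ f x) →
      eLpNorm (nHardy n f) (ENNReal.ofReal p) volume ≤
        ENNReal.ofReal C * eLpNorm f (ENNReal.ofReal p) volume := by
  have hfr : Module.finrank ℝ (EuclideanSpace ℝ (Fin n)) = n := finrank_euclideanSpace_fin
  haveI : Nontrivial (EuclideanSpace ℝ (Fin n)) :=
    Module.nontrivial_of_finrank_pos (R := ℝ) (by rw [hfr]; exact hn)
  have hp0 : 0 < p := by linarith
  have hp1 : p - 1 ≠ 0 := by intro h; nlinarith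
  set q : ℝ := p / (p - 1) with hqdef
  have hpq : p.HolderConjugate q := (Real.holderConjugate_iff_eq_conjExponent hp).2 rfl
  have hq1 : 1 < q := hpq.symm.lt
  have hq0 : 0 < q := by linarith
  have hn0 : (0:ℝ) < n := by exact_mod_cast hn
  -- exponents
  set a : ℝ := n / (p * q) with hadef
  set e : ℝ := n / q with hedef
  set s : ℝ := -(n : ℝ) * p + e * (p / q) with hsdef
  have ha : 0 < a := by positivity
  have he : 0 < e := by positivity
  have haq : a * q = n / p := by rw [hadef, hqdef]; field_simp
  have hap : a * p = n / q := by rw [hadef, hqdef]; field_simp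
  have r1 : -(a * q) + (n:ℝ) = e := by rw [haq, hedef, hqdef]; field_simp; ring
  have r2 : s + (n:ℝ) = -e := by rw [hsdef, hedef, hqdef]; field_simp; ring
  have r3 : a * p + (s + (n:ℝ)) = 0 := by rw [hap, r2, hedef]; ring
  have hcball : -((n:ℝ)) < -(a * q) := by
    rw [haq]; exact neg_lt_neg (div_lt_self hn0 hp)
  have hccompl : s < -((n:ℝ)) := by
    have h' : s + (n:ℝ) < 0 := by rw [r2]; linarith
    linarith
  -- constants
  set S : ℝ≥0∞ := (volume : Measure (EuclideanSpace ℝ (Fin n))).toSphere univ with hSdef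
  have hS : S ≠ ∞ := measure_ne_top _ _
  set K1 : ℝ≥0∞ := S * ENNReal.ofReal (1/e) with hK1def
  have hK1 : K1 ≠ ∞ := ENNReal.mul_ne_top hS ENNReal.ofReal_ne_top
  set c1 : ℝ≥0∞ := K1 ^ (p/q) with hc1def
  have hc1 : c1 ≠ ∞ := ENNReal.rpow_ne_top_of_nonneg (by positivity) hK1
  set K : ℝ≥0∞ := c1 * K1 with hKdef
  have hK : K ≠ ∞ := ENNReal.mul_ne_top hc1 hK1
  have hKp : K ^ (1/p) ≠ ∞ := ENNReal.rpow_ne_top_of_nonneg (by positivity) hK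
  refine ⟨(K ^ (1/p)).toReal + 1, by positivity, fun f hf hf0 => ?_⟩
  set F : EuclideanSpace ℝ (Fin n) → ℝ≥0∞ := fun t => ENNReal.ofReal (f t) with hFdef
  have hFmeas : Measurable F := ENNReal.measurable_ofReal.comp hf
  set Φ : EuclideanSpace ℝ (Fin n) → ℝ≥0∞ :=
    fun t => (ENNReal.ofReal ‖t‖) ^ (a * p) * F t ^ p with hΦdef
  have hΦmeas : Measurable Φ := by fun_prop
  have haeE : ∀ᵐ x : EuclideanSpace ℝ (Fin n) ∂volume, x ≠ 0 := by
    rw [ae_iff]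
    simpa using (measure_singleton (0 : EuclideanSpace ℝ (Fin n)))
  -- Hölder on balls
  have hball : ∀ R : ℝ, 0 < R →
      ∫⁻ t in ball (0 : EuclideanSpace ℝ (Fin n)) R, F t
        ≤ (S * ENNReal.ofReal (R ^ e / e)) ^ (1/q)
          * (∫⁻ t in ball (0 : EuclideanSpace ℝ (Fin n)) R, Φ t) ^ (1/p) := by
    intro R hR
    have hae0 : ∀ᵐ t : EuclideanSpace ℝ (Fin n)
        ∂(volume.restrict (ball (0 : EuclideanSpace ℝ (Fin n)) R)), t ≠ 0 :=
      ae_restrict_of_ae haeE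
    have step1 : ∫⁻ t in ball (0 : EuclideanSpace ℝ (Fin n)) R, F t
        = ∫⁻ t in ball (0 : EuclideanSpace ℝ (Fin n)) R,
            (((fun t => ((ENNReal.ofReal ‖t‖) ^ a)⁻¹)
              * fun t => (ENNReal.ofReal ‖t‖) ^ a * F t :
                EuclideanSpace ℝ (Fin n) → ℝ≥0∞)) t := by
      refine lintegral_congr_ae ?_
      filter_upwards [hae0] with t ht
      have h1 : (0:ℝ≥0∞) < (ENNReal.ofReal ‖t‖) ^ a :=
        ENNReal.rpow_pos (ENNReal.ofReal_pos.2 (norm_pos_iff.2 ht)) ENNReal.ofReal_ne_top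
      have h2 : (ENNReal.ofReal ‖t‖) ^ a ≠ ∞ :=
        ENNReal.rpow_ne_top_of_nonneg ha.le ENNReal.ofReal_ne_top
      show F t = ((ENNReal.ofReal ‖t‖) ^ a)⁻¹ * ((ENNReal.ofReal ‖t‖) ^ a * F t)
      rw [← mul_assoc, ENNReal.inv_mul_cancel h1.ne' h2, one_mul]
    rw [step1]
    refine le_trans (ENNReal.lintegral_mul_le_Lp_mul_Lq _ hpq.symm
      (f := fun t => ((ENNReal.ofReal ‖t‖) ^ a)⁻¹)
      (g := fun t => (ENNReal.ofReal ‖t‖) ^ a * F t)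
      (Measurable.aemeasurable (by fun_prop)) (Measurable.aemeasurable (by fun_prop))) ?_
    have fac1 : ∫⁻ t in ball (0 : EuclideanSpace ℝ (Fin n)) R, (((ENNReal.ofReal ‖t‖) ^ a)⁻¹) ^ q
        = S * ENNReal.ofReal (R ^ e / e) := by
      have hcongr : ∀ᵐ t ∂(volume.restrict (ball (0 : EuclideanSpace ℝ (Fin n)) R)),
          (((ENNReal.ofReal ‖t‖) ^ a)⁻¹) ^ q = ENNReal.ofReal (‖t‖ ^ (-(a*q))) := by
        filter_upwards [hae0] with t ht
        have hnt : (0:ℝ) < ‖t‖ := norm_pos_iff.2 ht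
        rw [← ENNReal.rpow_neg, ← ENNReal.rpow_mul, ENNReal.ofReal_rpow_of_pos hnt, neg_mul]
      rw [lintegral_congr_ae hcongr,
        lintegral_rpow_norm_ball (μ := (volume : Measure (EuclideanSpace ℝ (Fin n))))
          (c := -(a*q)) (by rw [hfr]; exact hcball) hR, hfr, r1, ← hSdef]
    have fac2 : ∫⁻ t in ball (0 : EuclideanSpace ℝ (Fin n)) R, ((ENNReal.ofReal ‖t‖) ^ a * F t) ^ p
        = ∫⁻ t in ball (0 : EuclideanSpace ℝ (Fin n)) R, Φ t := by
      refine lintegral_congr fun t => ?_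
      rw [ENNReal.mul_rpow_of_nonneg _ _ hp0.le, ← ENNReal.rpow_mul]
    rw [fac1, fac2]
  -- pointwise bound
  have hptw : ∀ x : EuclideanSpace ℝ (Fin n), x ≠ 0 →
      ((‖nHardy n f x‖₊ : ℝ≥0∞)) ^ p
        ≤ c1 * ((ENNReal.ofReal ‖x‖) ^ s
            * ∫⁻ t in ball (0 : EuclideanSpace ℝ (Fin n)) ‖x‖, Φ t) := by
    intro x hx
    have hR : (0:ℝ) < ‖x‖ := norm_pos_iff.2 hx
    have hxo0 : (ENNReal.ofReal ‖x‖) ≠ 0 := by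
      simp only [ne_eq, ENNReal.ofReal_eq_zero, not_le]; exact hR
    have hxoT : (ENNReal.ofReal ‖x‖) ≠ ∞ := ENNReal.ofReal_ne_top
    have h1 : ((‖nHardy n f x‖₊ : ℝ≥0∞))
        ≤ (ENNReal.ofReal ‖x‖) ^ (-(n:ℝ))
          * ∫⁻ t in ball (0 : EuclideanSpace ℝ (Fin n)) ‖x‖, F t := by
      have hinv : ((‖(‖x‖ ^ n)⁻¹‖₊ : ℝ≥0∞)) = (ENNReal.ofReal ‖x‖) ^ (-(n:ℝ)) := by
        rw [← enorm_eq_nnnorm, Real.enorm_eq_ofReal (by positivity),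
          show (‖x‖ ^ n)⁻¹ = ‖x‖ ^ (-(n:ℝ)) by
            rw [Real.rpow_neg (norm_nonneg x), Real.rpow_natCast],
          ENNReal.ofReal_rpow_of_pos hR]
      calc ((‖nHardy n f x‖₊ : ℝ≥0∞))
          = ((‖(‖x‖ ^ n)⁻¹‖₊ : ℝ≥0∞))
            * ((‖∫ t in ball (0 : EuclideanSpace ℝ (Fin n)) ‖x‖, f t‖₊ : ℝ≥0∞)) := by
            rw [nHardy, nnnorm_mul, ENNReal.coe_mul]
        _ ≤ (ENNReal.ofReal ‖x‖) ^ (-(n:ℝ))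
              * ∫⁻ t in ball (0 : EuclideanSpace ℝ (Fin n)) ‖x‖, F t := by
            rw [hinv]
            refine mul_le_mul_right ?_ _
            refine le_trans (enorm_integral_le_lintegral_enorm _) (le_of_eq ?_)
            refine lintegral_congr fun t => ?_
            rw [Real.enorm_eq_ofReal (hf0 t)]
    have hXadd : (ENNReal.ofReal ‖x‖) ^ (-(n:ℝ) * p) * (ENNReal.ofReal ‖x‖) ^ (e * (p/q))
        = (ENNReal.ofReal ‖x‖) ^ s := by
      rw [← ENNReal.rpow_add _ _ hxo0 hxoT, hsdef]
    have hD : S * ENNReal.ofReal (‖x‖ ^ e / e) = K1 * (ENNReal.ofReal ‖x‖) ^ e := by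
      rw [div_eq_mul_inv, ENNReal.ofReal_mul (Real.rpow_nonneg (norm_nonneg x) e),
        ENNReal.ofReal_rpow_of_pos hR, hK1def, one_div]
      ring
    have expand : ((K1 * (ENNReal.ofReal ‖x‖) ^ e) ^ (1/q)
          * (∫⁻ t in ball (0 : EuclideanSpace ℝ (Fin n)) ‖x‖, Φ t) ^ (1/p)) ^ p
        = c1 * ((ENNReal.ofReal ‖x‖) ^ (e * (p/q))
            * ∫⁻ t in ball (0 : EuclideanSpace ℝ (Fin n)) ‖x‖, Φ t) := by
      rw [ENNReal.mul_rpow_of_nonneg _ _ hp0.le,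
        ← ENNReal.rpow_mul (K1 * (ENNReal.ofReal ‖x‖) ^ e) (1/q) p,
        ← ENNReal.rpow_mul (∫⁻ t in ball (0 : EuclideanSpace ℝ (Fin n)) ‖x‖, Φ t) (1/p) p,
        one_div_mul_cancel hp0.ne', ENNReal.rpow_one,
        show 1/q * p = p/q by ring,
        ENNReal.mul_rpow_of_nonneg K1 _ (by positivity),
        ← ENNReal.rpow_mul (ENNReal.ofReal ‖x‖) e (p/q), ← hc1def, mul_assoc]
    calc ((‖nHardy n f x‖₊ : ℝ≥0∞)) ^ p
        ≤ ((ENNReal.ofReal ‖x‖) ^ (-(n:ℝ))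
            * ∫⁻ t in ball (0 : EuclideanSpace ℝ (Fin n)) ‖x‖, F t) ^ p :=
          ENNReal.rpow_le_rpow h1 hp0.le
      _ = ((ENNReal.ofReal ‖x‖) ^ (-(n:ℝ))) ^ p
            * (∫⁻ t in ball (0 : EuclideanSpace ℝ (Fin n)) ‖x‖, F t) ^ p :=
          ENNReal.mul_rpow_of_nonneg _ _ hp0.le
      _ ≤ ((ENNReal.ofReal ‖x‖) ^ (-(n:ℝ))) ^ p
            * (((S * ENNReal.ofReal (‖x‖ ^ e / e)) ^ (1/q)
              * (∫⁻ t in ball (0 : EuclideanSpace ℝ (Fin n)) ‖x‖, Φ t) ^ (1/p)) ^ p) :=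
          mul_le_mul_right (ENNReal.rpow_le_rpow (hball ‖x‖ hR) hp0.le) _
      _ = c1 * ((ENNReal.ofReal ‖x‖) ^ s
            * ∫⁻ t in ball (0 : EuclideanSpace ℝ (Fin n)) ‖x‖, Φ t) := by
          rw [hD, expand, ← ENNReal.rpow_mul, ← hXadd]
          ring
  -- integrate the pointwise bound and apply Tonelli
  have hmain : ∫⁻ x, ((‖nHardy n f x‖₊ : ℝ≥0∞)) ^ p ∂volume
      ≤ K * ∫⁻ t, F t ^ p ∂volume := by
    have step1 : ∫⁻ x, ((‖nHardy n f x‖₊ : ℝ≥0∞)) ^ p ∂volume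
        ≤ c1 * ∫⁻ x : EuclideanSpace ℝ (Fin n), (ENNReal.ofReal ‖x‖) ^ s
            * ∫⁻ t in ball (0 : EuclideanSpace ℝ (Fin n)) ‖x‖, Φ t ∂volume := by
      rw [← lintegral_const_mul' c1 (fun x => (ENNReal.ofReal ‖x‖) ^ s
        * ∫⁻ t in ball (0 : EuclideanSpace ℝ (Fin n)) ‖x‖, Φ t) hc1]
      refine lintegral_mono_ae ?_
      filter_upwards [haeE] with x hx
      exact hptw x hx
    refine le_trans step1 (le_of_eq ?_)
    set T : Set (EuclideanSpace ℝ (Fin n) × EuclideanSpace ℝ (Fin n)) :=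
      {z | ‖z.2‖ < ‖z.1‖} with hTdef
    have hT : MeasurableSet T :=
      measurableSet_lt (measurable_norm.comp measurable_snd) (measurable_norm.comp measurable_fst)
    set Ψ : EuclideanSpace ℝ (Fin n) × EuclideanSpace ℝ (Fin n) → ℝ≥0∞ :=
      fun z => (ENNReal.ofReal ‖z.1‖) ^ s * T.indicator (fun w => Φ w.2) z with hΨdef
    have hΨmeas : Measurable Ψ := by
      refine Measurable.mul (by fun_prop) (Measurable.indicator (hΦmeas.comp measurable_snd) hT)
    have hgx : ∀ x : EuclideanSpace ℝ (Fin n),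
        (ENNReal.ofReal ‖x‖) ^ s * ∫⁻ t in ball (0 : EuclideanSpace ℝ (Fin n)) ‖x‖, Φ t
          = ∫⁻ t, Ψ (x, t) ∂volume := by
      intro x
      rw [← lintegral_indicator measurableSet_ball,
        ← lintegral_const_mul _ (hΦmeas.indicator measurableSet_ball)]
      refine lintegral_congr fun t => ?_
      by_cases h : ‖t‖ < ‖x‖
      · rw [Set.indicator_of_mem (mem_ball_zero_iff.2 h)]
        simp only [hΨdef]
        rw [Set.indicator_of_mem (show (x,t) ∈ T from h)]
      · rw [Set.indicator_of_notMem (fun hm => h (mem_ball_zero_iff.1 hm))]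
        simp only [hΨdef]
        rw [Set.indicator_of_notMem (show (x,t) ∉ T from h), mul_zero]
    have hswap : ∫⁻ x, ∫⁻ t, Ψ (x, t) ∂volume ∂volume
        = ∫⁻ t, ∫⁻ x, Ψ (x, t) ∂volume ∂volume :=
      lintegral_lintegral_swap hΨmeas.aemeasurable
    have hinner : ∀ t : EuclideanSpace ℝ (Fin n), t ≠ 0 →
        ∫⁻ x, Ψ (x, t) ∂volume = K1 * ((ENNReal.ofReal ‖t‖) ^ (s + n) * Φ t) := by
      intro t ht
      have hRt : (0:ℝ) < ‖t‖ := norm_pos_iff.2 ht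
      have e1 : ∫⁻ x, Ψ (x, t) ∂volume
          = ∫⁻ x in (closedBall (0 : EuclideanSpace ℝ (Fin n)) ‖t‖)ᶜ,
              (ENNReal.ofReal ‖x‖) ^ s * Φ t ∂volume := by
        rw [← lintegral_indicator measurableSet_closedBall.compl]
        refine lintegral_congr fun x => ?_
        by_cases h : ‖t‖ < ‖x‖
        · simp only [hΨdef]
          rw [Set.indicator_of_mem (show (x,t) ∈ T from h),
            Set.indicator_of_mem (show x ∈ (closedBall (0 : EuclideanSpace ℝ (Fin n)) ‖t‖)ᶜ by
              simpa [mem_closedBall_zero_iff] using not_le.2 h)]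
        · simp only [hΨdef]
          rw [Set.indicator_of_notMem (show (x,t) ∉ T from h),
            Set.indicator_of_notMem (show x ∉ (closedBall (0 : EuclideanSpace ℝ (Fin n)) ‖t‖)ᶜ by
              simpa [mem_closedBall_zero_iff, not_lt] using not_lt.1 h), mul_zero]
      have e2 : ∫⁻ x in (closedBall (0 : EuclideanSpace ℝ (Fin n)) ‖t‖)ᶜ,
            (ENNReal.ofReal ‖x‖) ^ s ∂volume
          = S * ENNReal.ofReal (-(‖t‖ ^ (s + n)) / (s + n)) := by
        have hcongr : ∀ x ∈ (closedBall (0 : EuclideanSpace ℝ (Fin n)) ‖t‖)ᶜ,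
            (ENNReal.ofReal ‖x‖) ^ s = ENNReal.ofReal (‖x‖ ^ s) := by
          intro x hx
          have hxx : (0:ℝ) < ‖x‖ := lt_trans hRt (by
            simpa [mem_closedBall_zero_iff, not_le] using hx)
          rw [ENNReal.ofReal_rpow_of_pos hxx]
        rw [setLIntegral_congr_fun measurableSet_closedBall.compl
            hcongr,
          lintegral_rpow_norm_compl (μ := (volume : Measure (EuclideanSpace ℝ (Fin n))))
            (c := s) (by rw [hfr]; exact hccompl) hRt, hfr, ← hSdef]
      have harg : -(‖t‖ ^ (s + (n:ℝ))) / (s + (n:ℝ)) = ‖t‖ ^ (s + (n:ℝ)) * (1/e) := by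
        rw [r2]; field_simp
      rw [e1, lintegral_mul_const _ (by fun_prop), e2, harg,
        ENNReal.ofReal_mul (Real.rpow_nonneg (norm_nonneg t) _),
        ENNReal.ofReal_rpow_of_pos hRt, hK1def]
      ring
    have houter : ∫⁻ t, ∫⁻ x, Ψ (x, t) ∂volume ∂volume
        = K1 * ∫⁻ t, (ENNReal.ofReal ‖t‖) ^ (s + n) * Φ t ∂volume := by
      rw [← lintegral_const_mul' K1
        (fun t => (ENNReal.ofReal ‖t‖) ^ (s + (n:ℝ)) * Φ t) hK1]
      refine lintegral_congr_ae ?_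
      filter_upwards [haeE] with t ht
      exact hinner t ht
    have hfinal : ∫⁻ t, (ENNReal.ofReal ‖t‖) ^ (s + n) * Φ t ∂volume
        = ∫⁻ t, F t ^ p ∂volume := by
      refine lintegral_congr_ae ?_
      filter_upwards [haeE] with t ht
      have hRt : (0:ℝ) < ‖t‖ := norm_pos_iff.2 ht
      have hne : (ENNReal.ofReal ‖t‖) ≠ 0 := by
        simp only [ne_eq, ENNReal.ofReal_eq_zero, not_le]; exact hRt
      rw [hΦdef, ← mul_assoc, ← ENNReal.rpow_add _ _ hne ENNReal.ofReal_ne_top,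
        show s + (n:ℝ) + a * p = 0 by linarith [r3], ENNReal.rpow_zero, one_mul]
    calc c1 * ∫⁻ x : EuclideanSpace ℝ (Fin n), (ENNReal.ofReal ‖x‖) ^ s
          * ∫⁻ t in ball (0 : EuclideanSpace ℝ (Fin n)) ‖x‖, Φ t ∂volume
        = c1 * ∫⁻ x, ∫⁻ t, Ψ (x, t) ∂volume ∂volume := by
          rw [lintegral_congr fun x => hgx x]
      _ = c1 * ∫⁻ t, ∫⁻ x, Ψ (x, t) ∂volume ∂volume := by rw [hswap]
      _ = c1 * (K1 * ∫⁻ t, F t ^ p ∂volume) := by rw [houter, hfinal]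
      _ = K * ∫⁻ t, F t ^ p ∂volume := by rw [hKdef]; ring
  -- conclude with eLpNorm
  have hpne0 : (ENNReal.ofReal p) ≠ 0 := by
    simp only [ne_eq, ENNReal.ofReal_eq_zero, not_le]; exact hp0
  rw [eLpNorm_eq_lintegral_rpow_enorm_toReal hpne0 ENNReal.ofReal_ne_top,
      eLpNorm_eq_lintegral_rpow_enorm_toReal hpne0 ENNReal.ofReal_ne_top,
      ENNReal.toReal_ofReal hp0.le]
  simp only [enorm_eq_nnnorm]
  have hFf : ∫⁻ t, ((‖f t‖₊ : ℝ≥0∞)) ^ p ∂volume = ∫⁻ t, F t ^ p ∂volume :=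
    lintegral_congr fun t => by rw [← enorm_eq_nnnorm, Real.enorm_eq_ofReal (hf0 t)]
  rw [hFf]
  calc (∫⁻ x, ((‖nHardy n f x‖₊ : ℝ≥0∞)) ^ p ∂volume) ^ (1/p)
      ≤ (K * ∫⁻ t, F t ^ p ∂volume) ^ (1/p) :=
        ENNReal.rpow_le_rpow hmain (by positivity)
    _ = K ^ (1/p) * (∫⁻ t, F t ^ p ∂volume) ^ (1/p) :=
        ENNReal.mul_rpow_of_nonneg _ _ (by positivity)
    _ ≤ ENNReal.ofReal ((K ^ (1/p)).toReal + 1) * (∫⁻ t, F t ^ p ∂volume) ^ (1/p) := by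
        refine mul_le_mul_left ?_ _
        conv_lhs => rw [← ENNReal.ofReal_toReal hKp]
        exact ENNReal.ofReal_le_ofReal (by linarith)
end
end
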